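/- Let (A j)_{j : Fin J} (J ≥ 1) be a finite family of real (s₁+s₂)×(s₁+s₂) matrices, and suppose there is an invertible real (s₁+s₂)×(s₁+s₂) matrix V such that for every j, V · A j · V⁻¹ is block upper triangular, i.e., equal to fromBlocks (B j) (C j) 0 (D j) for some s₁×s₁ matrices B j, s₁×s₂ matrices C j and s₂×s₂ matrices D j. Then JSR((A j)_j) = max(JSR((B j)_j), JSR((D j)_j)). -/

import Mathlib

open Matrix

/-- Operator norm on real s×s matrices induced by the Euclidean norm. -/
noncomputable def l2OpNorm {s : ℕ} (A : Matrix (Fin s) (Fin s) ℝ) : ℝ :=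
  ‖Matrix.toEuclideanCLM (𝕜 := ℝ) A‖

/-- Spectral radius of a real matrix viewed as a complex matrix. -/
noncomputable def specRad {s : ℕ} (A : Matrix (Fin s) (Fin s) ℝ) : ℝ :=
  (spectralRadius ℂ (A.map (Complex.ofReal : ℝ → ℂ))).toReal

/-- The ordered product `A (w (n-1)) * ⋯ * A (w 0)`. -/
noncomputable def wordProd {s J n : ℕ} (A : Fin J → Matrix (Fin s) (Fin s) ℝ)
    (w : Fin n → Fin J) : Matrix (Fin s) (Fin s) ℝ :=
  ((List.ofFn fun i => A (w i)).reverse).prod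

/-- Joint spectral radius of a finite family of real s×s matrices. -/
noncomputable def JSR {s J : ℕ} (A : Fin J → Matrix (Fin s) (Fin s) ℝ) : ℝ :=
  ⨅ n : {m : ℕ // 1 ≤ m}, ⨆ w : Fin (n : ℕ) → Fin J,
    l2OpNorm (wordProd A w) ^ (1 / ((n : ℕ) : ℝ))

/-- The pair has the finiteness property. -/
def FinitenessProperty {s : ℕ} (A : Fin 2 → Matrix (Fin s) (Fin s) ℝ) : Prop :=
  ∃ n : ℕ, 1 ≤ n ∧ ∃ w : Fin n → Fin 2,
    specRad (wordProd A w) ^ (1 / (n : ℝ)) = JSR A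

/-!
Conjugation by `V` changes the norms of all word products by at most a constant factor, which
does not affect the joint spectral radius, so we may work with the block triangular family. A
product of `n` block triangular matrices is block triangular, with diagonal blocks the
corresponding products of the `B j` and of the `D j`; its upper right block is
`∑ₖ B(w₁) ⋯ B(wₖ₋₁) C(wₖ) D(wₖ₊₁) ⋯ D(wₙ)`. The diagonal blocks are compressions of the product,
which gives `max (JSR B) (JSR D) ≤ JSR A`. Conversely, if `r` exceeds the joint spectral radius
of a family, all its products of some length `k` have norm below `rᵏ`, and cutting words into
pieces of length `k` shows that all its products of length `n` are `O(rⁿ)`. For `r` above both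
`JSR B` and `JSR D` the upper right block is then `O(n rⁿ)`, and the factor `n` disappears on
taking `n`-th roots.
-/

open Filter Topology
open scoped Matrix.Norms.L2Operator

namespace Matrix

variable {𝕜 : Type*} [RCLike 𝕜] {α β γ δ : Type*} [Fintype α] [Fintype β] [Fintype γ] [Fintype δ]

lemma l2_opNorm_one_le [DecidableEq α] : ‖(1 : Matrix α α 𝕜)‖ ≤ 1 := by
  rw [cstar_norm_def, map_one]
  exact ContinuousLinearMap.norm_id_le

lemma l2_opNorm_le_one_of_conjTranspose_mul_self_eq_one [DecidableEq β] {X : Matrix α β 𝕜}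
    (h : Xᴴ * X = 1) : ‖X‖ ≤ 1 := by
  have hX : ‖X‖ * ‖X‖ ≤ 1 := by
    rw [← l2_opNorm_conjTranspose_mul_self, h]
    exact l2_opNorm_one_le
  nlinarith [norm_nonneg X]

lemma l2_opNorm_mul_mul_le [DecidableEq β] [DecidableEq γ] [DecidableEq δ] (X : Matrix α β 𝕜)
    (M : Matrix β γ 𝕜) (Y : Matrix γ δ 𝕜) : ‖X * M * Y‖ ≤ ‖X‖ * ‖M‖ * ‖Y‖ :=
  (l2_opNorm_mul _ _).trans (by gcongr; exact l2_opNorm_mul _ _)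

lemma l2_opNorm_mul_mul_le_of_le_one [DecidableEq β] [DecidableEq γ] [DecidableEq δ]
    {X : Matrix α β 𝕜} {M : Matrix β γ 𝕜} {Y : Matrix γ δ 𝕜} (hX : ‖X‖ ≤ 1) (hY : ‖Y‖ ≤ 1) :
    ‖X * M * Y‖ ≤ ‖M‖ :=
  calc ‖X * M * Y‖ ≤ ‖X‖ * ‖M‖ * ‖Y‖ := l2_opNorm_mul_mul_le X M Y
    _ ≤ 1 * ‖M‖ * 1 := by gcongr
    _ = ‖M‖ := by ring

lemma l2_opNorm_fromRows_one_zero_le [DecidableEq α] :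
    ‖fromRows (1 : Matrix α α 𝕜) (0 : Matrix β α 𝕜)‖ ≤ 1 :=
  l2_opNorm_le_one_of_conjTranspose_mul_self_eq_one <| by
    simp [conjTranspose_fromRows_eq_fromCols_conjTranspose, fromCols_mul_fromRows]

lemma l2_opNorm_fromRows_zero_one_le [DecidableEq β] :
    ‖fromRows (0 : Matrix α β 𝕜) (1 : Matrix β β 𝕜)‖ ≤ 1 :=
  l2_opNorm_le_one_of_conjTranspose_mul_self_eq_one <| by
    simp [conjTranspose_fromRows_eq_fromCols_conjTranspose, fromCols_mul_fromRows]

lemma l2_opNorm_le_fromBlocks₁₁ [DecidableEq α] [DecidableEq β] (A : Matrix α α 𝕜)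
    (B : Matrix α β 𝕜) (C : Matrix β α 𝕜) (D : Matrix β β 𝕜) : ‖A‖ ≤ ‖fromBlocks A B C D‖ := by
  set ι : Matrix (α ⊕ β) α 𝕜 := fromRows 1 0
  have hι : ‖ι‖ ≤ 1 := l2_opNorm_fromRows_one_zero_le
  have hA : ιᴴ * fromBlocks A B C D * ι = A := by
    simp [ι, conjTranspose_fromRows_eq_fromCols_conjTranspose, Matrix.mul_assoc,
      fromBlocks_mul_fromRows, fromCols_mul_fromRows]
  calc ‖A‖ = ‖ιᴴ * fromBlocks A B C D * ι‖ := by rw [hA]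
    _ ≤ _ := l2_opNorm_mul_mul_le_of_le_one (by rwa [l2_opNorm_conjTranspose]) hι

lemma l2_opNorm_le_fromBlocks₂₂ [DecidableEq α] [DecidableEq β] (A : Matrix α α 𝕜)
    (B : Matrix α β 𝕜) (C : Matrix β α 𝕜) (D : Matrix β β 𝕜) : ‖D‖ ≤ ‖fromBlocks A B C D‖ := by
  set ι : Matrix (α ⊕ β) β 𝕜 := fromRows 0 1
  have hι : ‖ι‖ ≤ 1 := l2_opNorm_fromRows_zero_one_le
  have hD : ιᴴ * fromBlocks A B C D * ι = D := by
    simp [ι, conjTranspose_fromRows_eq_fromCols_conjTranspose, Matrix.mul_assoc,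
      fromBlocks_mul_fromRows, fromCols_mul_fromRows]
  calc ‖D‖ = ‖ιᴴ * fromBlocks A B C D * ι‖ := by rw [hD]
    _ ≤ _ := l2_opNorm_mul_mul_le_of_le_one (by rwa [l2_opNorm_conjTranspose]) hι

lemma l2_opNorm_fromBlocks_zero₂₁_le [DecidableEq α] [DecidableEq β] (A : Matrix α α 𝕜)
    (B : Matrix α β 𝕜) (D : Matrix β β 𝕜) : ‖fromBlocks A B 0 D‖ ≤ ‖A‖ + ‖B‖ + ‖D‖ := by
  set ι₁ : Matrix (α ⊕ β) α 𝕜 := fromRows 1 0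
  set ι₂ : Matrix (α ⊕ β) β 𝕜 := fromRows 0 1
  have h₁ : ‖ι₁‖ ≤ 1 := l2_opNorm_fromRows_one_zero_le
  have h₂ : ‖ι₂‖ ≤ 1 := l2_opNorm_fromRows_zero_one_le
  have h₁' : ‖ι₁ᴴ‖ ≤ 1 := by rwa [l2_opNorm_conjTranspose]
  have h₂' : ‖ι₂ᴴ‖ ≤ 1 := by rwa [l2_opNorm_conjTranspose]
  have hsplit : fromBlocks A B 0 D = ι₁ * A * ι₁ᴴ + ι₁ * B * ι₂ᴴ + ι₂ * D * ι₂ᴴ := by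
    ext (i | i) (j | j) <;>
      simp [ι₁, ι₂, conjTranspose_fromRows_eq_fromCols_conjTranspose, fromRows_mul]
  calc ‖fromBlocks A B 0 D‖ ≤ ‖ι₁ * A * ι₁ᴴ‖ + ‖ι₁ * B * ι₂ᴴ‖ + ‖ι₂ * D * ι₂ᴴ‖ := by
        rw [hsplit]; exact norm_add₃_le
    _ ≤ ‖A‖ + ‖B‖ + ‖D‖ := by
        gcongr <;> exact l2_opNorm_mul_mul_le_of_le_one ‹_› ‹_›

end Matrix

section ListProd

variable {R ι : Type*} [SeminormedRing R]

lemma norm_prod_map_le_pow (h₁ : ‖(1 : R)‖ ≤ 1) {f : ι → R} {c : ℝ} (hf : ∀ j, ‖f j‖ ≤ c)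
    (l : List ι) : ‖(l.map f).prod‖ ≤ c ^ l.length := by
  induction l with
  | nil => simpa using h₁
  | cons j l ih =>
    rw [List.map_cons, List.prod_cons, List.length_cons, pow_succ']
    exact (norm_mul_le _ _).trans
      (mul_le_mul (hf j) ih (norm_nonneg _) ((norm_nonneg _).trans (hf j)))

lemma norm_prod_map_le_of_norm_prod_map_le_of_length_eq (h₁ : ‖(1 : R)‖ ≤ 1) {f : ι → R}
    {c r : ℝ} {k : ℕ} (hk₀ : 0 < k) (hc : 0 ≤ c) (hr : 0 < r) (hf : ∀ j, ‖f j‖ ≤ c)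
    (hk : ∀ l : List ι, l.length = k → ‖(l.map f).prod‖ ≤ r ^ k) (l : List ι) :
    ‖(l.map f).prod‖ ≤ max 1 (c / r) ^ k * r ^ l.length := by
  induction h : l.length using Nat.strong_induction_on generalizing l with
  | _ n ih =>
  by_cases hnk : n < k
  · calc ‖(l.map f).prod‖ ≤ c ^ n := h ▸ norm_prod_map_le_pow h₁ hf l
      _ = (c / r) ^ n * r ^ n := by rw [← mul_pow, div_mul_cancel₀ _ hr.ne']
      _ ≤ max 1 (c / r) ^ k * r ^ n := by
        gcongr
        calc (c / r) ^ n ≤ max 1 (c / r) ^ n := by gcongr; exact le_max_right _ _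
          _ ≤ max 1 (c / r) ^ k := pow_le_pow_right₀ (le_max_left _ _) hnk.le
  · push Not at hnk
    have hdrop := ih (n - k) (by omega) (l.drop k) (by simp [h])
    calc ‖(l.map f).prod‖ = ‖((l.take k).map f).prod * ((l.drop k).map f).prod‖ := by
          rw [← List.prod_append, ← List.map_append, List.take_append_drop]
      _ ≤ r ^ k * (max 1 (c / r) ^ k * r ^ (n - k)) :=
          (norm_mul_le _ _).trans (mul_le_mul (hk _ (by simp [h, hnk]))
            hdrop (norm_nonneg _) (by positivity))
      _ = max 1 (c / r) ^ k * r ^ n := by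
          rw [mul_left_comm, ← pow_add, Nat.add_sub_cancel' hnk]

end ListProd

lemma tendsto_mul_natCast_add_one_rpow_one_div {K : ℝ} (hK : 0 < K) :
    Tendsto (fun n : ℕ => (K * (n + 1)) ^ (1 / (n : ℝ))) atTop (𝓝 1) := by
  have hK' : Tendsto (fun n : ℕ => K ^ (1 / (n : ℝ))) atTop (𝓝 1) := by
    simpa using tendsto_const_nhds.rpow (tendsto_one_div_atTop_nhds_zero_nat) (Or.inl hK.ne')
  have hn : Tendsto (fun n : ℕ => ((n : ℝ) + 1) ^ (1 / (n : ℝ))) atTop (𝓝 1) := by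
    have := (tendsto_rpow_div_mul_add 1 1 (-1) one_ne_zero.symm).comp
      (tendsto_atTop_add_const_right atTop 1 tendsto_natCast_atTop_atTop)
    exact this.congr fun n => by simp
  simpa using (hK'.mul hn).congr fun n => (Real.mul_rpow hK.le (by positivity)).symm

lemma l2OpNorm_eq_norm {s : ℕ} (A : Matrix (Fin s) (Fin s) ℝ) : l2OpNorm A = ‖A‖ := rfl

lemma wordProd_eq_prod_map {s J n : ℕ} (A : Fin J → Matrix (Fin s) (Fin s) ℝ)
    (w : Fin n → Fin J) : wordProd A w = ((List.ofFn w).reverse.map A).prod := by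
  rw [wordProd, List.map_reverse, List.map_ofFn]
  rfl

lemma exists_wordProd_eq_prod_map {s J : ℕ} (A : Fin J → Matrix (Fin s) (Fin s) ℝ)
    (l : List (Fin J)) : ∃ w : Fin l.length → Fin J, wordProd A w = (l.map A).prod := by
  refine ⟨fun i => l.reverse[i]'(by simp), ?_⟩
  rw [wordProd_eq_prod_map]
  congr 2
  rw [List.reverse_eq_iff]
  exact List.ext_getElem (by simp) (by simp)

section JSR

variable {s J : ℕ} (A : Fin J → Matrix (Fin s) (Fin s) ℝ)

lemma bddBelow_range_iSup_norm_wordProd_rpow :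
    BddBelow (Set.range fun n : {m : ℕ // 1 ≤ m} =>
      ⨆ w : Fin n → Fin J, l2OpNorm (wordProd A w) ^ (1 / ((n : ℕ) : ℝ))) :=
  ⟨0, by
    rintro _ ⟨n, rfl⟩
    exact Real.iSup_nonneg fun w => Real.rpow_nonneg (norm_nonneg _) _⟩

lemma JSR_nonneg : 0 ≤ JSR A :=
  Real.iInf_nonneg fun _ => Real.iSup_nonneg fun _ => Real.rpow_nonneg (norm_nonneg _) _

lemma exists_norm_prod_map_le_of_JSR_lt {r : ℝ} (hr : JSR A < r) :
    ∃ K, 0 ≤ K ∧ ∀ l : List (Fin J), ‖(l.map A).prod‖ ≤ K * r ^ l.length := by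
  have hr₀ : 0 < r := (JSR_nonneg A).trans_lt hr
  obtain ⟨⟨k, hk₀⟩, hk⟩ := exists_lt_of_ciInf_lt hr
  have hchunk : ∀ l : List (Fin J), l.length = k → ‖(l.map A).prod‖ ≤ r ^ k := by
    rintro l rfl
    obtain ⟨w, hw⟩ := exists_wordProd_eq_prod_map A l
    have hw' : ‖wordProd A w‖ ^ (l.length : ℝ)⁻¹ < r := by
      rw [← one_div]
      exact (le_ciSup (Set.finite_range _).bddAbove w).trans_lt hk
    rw [Real.rpow_inv_lt_iff_of_pos (norm_nonneg _) hr₀.le (by positivity),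
      Real.rpow_natCast, hw] at hw'
    exact hw'.le
  exact ⟨_, by positivity, norm_prod_map_le_of_norm_prod_map_le_of_length_eq l2_opNorm_one_le
    hk₀ (Finset.univ.sum_nonneg fun j _ => norm_nonneg (A j)) hr₀
    (fun j => Finset.single_le_sum (fun j _ => norm_nonneg (A j)) (Finset.mem_univ j)) hchunk⟩

lemma JSR_le_of_norm_prod_map_le {K r : ℝ} (hr : 0 ≤ r)
    (h : ∀ l : List (Fin J), ‖(l.map A).prod‖ ≤ K * (l.length + 1) * r ^ l.length) :
    JSR A ≤ r := by
  set K' := max K 1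
  have hK' : 0 < K' := lt_max_of_lt_right one_pos
  have hbound : ∀ n : ℕ, 1 ≤ n → JSR A ≤ (K' * (n + 1)) ^ (1 / (n : ℝ)) * r := by
    intro n hn
    calc JSR A ≤ ⨆ w : Fin n → Fin J, l2OpNorm (wordProd A w) ^ (1 / (n : ℝ)) :=
          ciInf_le (bddBelow_range_iSup_norm_wordProd_rpow A) ⟨n, hn⟩
      _ ≤ (K' * (n + 1) * r ^ n) ^ (1 / (n : ℝ)) := by
          refine Real.iSup_le (fun w => ?_) (by positivity)
          refine Real.rpow_le_rpow (norm_nonneg _) ?_ (by positivity)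
          rw [l2OpNorm_eq_norm, wordProd_eq_prod_map]
          calc _ ≤ K * (n + 1) * r ^ n := by simpa using h (List.ofFn w).reverse
            _ ≤ K' * (n + 1) * r ^ n := by gcongr; exact le_max_left _ _
      _ = (K' * (n + 1)) ^ (1 / (n : ℝ)) * r := by
          rw [Real.mul_rpow (by positivity) (by positivity), ← Real.rpow_natCast,
            ← Real.rpow_mul hr, mul_one_div_cancel (by positivity), Real.rpow_one]
  exact ge_of_tendsto (by simpa using (tendsto_mul_natCast_add_one_rpow_one_div hK').mul_const r)
    (eventually_atTop.2 ⟨1, hbound⟩)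

end JSR

section BlockTriangular

variable {ι R 𝕜 α β : Type*} [RCLike 𝕜] [Fintype α] [Fintype β] [DecidableEq α] [DecidableEq β]

def prodFromBlocks₁₂ [Semiring R] (B : ι → Matrix α α R) (C : ι → Matrix α β R)
    (D : ι → Matrix β β R) : List ι → Matrix α β R
  | [] => 0
  | j :: l => B j * prodFromBlocks₁₂ B C D l + C j * (l.map D).prod

lemma prod_map_fromBlocks_zero₂₁ [Semiring R] (B : ι → Matrix α α R) (C : ι → Matrix α β R)
    (D : ι → Matrix β β R) (l : List ι) :
    (l.map fun j => fromBlocks (B j) (C j) 0 (D j)).prod =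
      fromBlocks (l.map B).prod (prodFromBlocks₁₂ B C D l) 0 (l.map D).prod := by
  induction l with
  | nil => simp [prodFromBlocks₁₂]
  | cons j l ih => simp [prodFromBlocks₁₂, ih, fromBlocks_multiply]

lemma norm_prod_map_le_norm_prod_map_fromBlocks₁₁ {B : ι → Matrix α α 𝕜} (C : ι → Matrix α β 𝕜)
    (D : ι → Matrix β β 𝕜) (l : List ι) :
    ‖(l.map B).prod‖ ≤ ‖(l.map fun j => fromBlocks (B j) (C j) 0 (D j)).prod‖ := by
  rw [prod_map_fromBlocks_zero₂₁]
  exact l2_opNorm_le_fromBlocks₁₁ _ _ _ _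

lemma norm_prod_map_le_norm_prod_map_fromBlocks₂₂ (B : ι → Matrix α α 𝕜) (C : ι → Matrix α β 𝕜)
    {D : ι → Matrix β β 𝕜} (l : List ι) :
    ‖(l.map D).prod‖ ≤ ‖(l.map fun j => fromBlocks (B j) (C j) 0 (D j)).prod‖ := by
  rw [prod_map_fromBlocks_zero₂₁]
  exact l2_opNorm_le_fromBlocks₂₂ _ _ _ _

variable {B : ι → Matrix α α 𝕜} {C : ι → Matrix α β 𝕜} {D : ι → Matrix β β 𝕜} {KB KD c r : ℝ}

lemma norm_prod_map_mul_prodFromBlocks₁₂_le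
    (hB : ∀ l : List ι, ‖(l.map B).prod‖ ≤ KB * r ^ l.length) (hC : ∀ j, ‖C j‖ ≤ c * r)
    (hD : ∀ l : List ι, ‖(l.map D).prod‖ ≤ KD * r ^ l.length) (l u : List ι) :
    ‖(u.map B).prod * prodFromBlocks₁₂ B C D l‖ ≤
      l.length * (KB * c * KD) * r ^ (u.length + l.length) := by
  -- The recursion for `prodFromBlocks₁₂` multiplies by a single `B j` on the left, which has no
  -- good bound on its own; absorbing it into the prefix `u` avoids this.
  induction l generalizing u with
  | nil => simp [prodFromBlocks₁₂]
  | cons j l ih =>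
    have hsplit : (u.map B).prod * prodFromBlocks₁₂ B C D (j :: l) =
        ((u ++ [j]).map B).prod * prodFromBlocks₁₂ B C D l +
          (u.map B).prod * C j * (l.map D).prod := by
      simp [prodFromBlocks₁₂, Matrix.mul_add, Matrix.mul_assoc]
    have hlast : ‖(u.map B).prod * C j * (l.map D).prod‖ ≤
        KB * r ^ u.length * (c * r) * (KD * r ^ l.length) := by
      refine (l2_opNorm_mul_mul_le _ _ _).trans ?_
      have hKB : 0 ≤ KB * r ^ u.length := (norm_nonneg _).trans (hB u)
      have hcr : 0 ≤ c * r := (norm_nonneg _).trans (hC j)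
      exact mul_le_mul (mul_le_mul (hB u) (hC j) (norm_nonneg _) hKB) (hD l) (norm_nonneg _)
        (mul_nonneg hKB hcr)
    calc _ ≤ ‖((u ++ [j]).map B).prod * prodFromBlocks₁₂ B C D l‖ +
          ‖(u.map B).prod * C j * (l.map D).prod‖ := hsplit ▸ norm_add_le _ _
      _ ≤ l.length * (KB * c * KD) * r ^ ((u ++ [j]).length + l.length) +
          KB * r ^ u.length * (c * r) * (KD * r ^ l.length) := add_le_add (ih _) hlast
      _ = _ := by
        simp only [List.length_append, List.length_cons, List.length_nil]
        push_cast
        ring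

lemma norm_prod_map_fromBlocks_zero₂₁_le (hKB : 0 ≤ KB) (hc : 0 ≤ c) (hKD : 0 ≤ KD) (hr : 0 ≤ r)
    (hB : ∀ l : List ι, ‖(l.map B).prod‖ ≤ KB * r ^ l.length) (hC : ∀ j, ‖C j‖ ≤ c * r)
    (hD : ∀ l : List ι, ‖(l.map D).prod‖ ≤ KD * r ^ l.length) (l : List ι) :
    ‖(l.map fun j => fromBlocks (B j) (C j) 0 (D j)).prod‖ ≤
      (KB + KB * c * KD + KD) * (l.length + 1) * r ^ l.length := by
  have hX := norm_prod_map_mul_prodFromBlocks₁₂_le hB hC hD l []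
  rw [List.map_nil, List.prod_nil, Matrix.one_mul, List.length_nil, zero_add] at hX
  rw [prod_map_fromBlocks_zero₂₁]
  calc _ ≤ _ := l2_opNorm_fromBlocks_zero₂₁_le _ _ _
    _ ≤ KB * r ^ l.length + l.length * (KB * c * KD) * r ^ l.length + KD * r ^ l.length := by
        gcongr <;> [exact hB l; exact hD l]
    _ ≤ _ := by
        have hrn : 0 ≤ r ^ l.length := by positivity
        have hn : (0 : ℝ) ≤ l.length := Nat.cast_nonneg _
        nlinarith [mul_nonneg (mul_nonneg (add_nonneg hKB hKD) hn) hrn,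
          mul_nonneg (mul_nonneg (mul_nonneg hKB hc) hKD) hrn]

end BlockTriangular

section Conj

variable {ι R 𝕜 α β : Type*} [Fintype α] [Fintype β] [DecidableEq α] [DecidableEq β]

lemma prod_map_conj [Semiring R] {W : Matrix β α R} {W' : Matrix α β R} (hWW' : W * W' = 1)
    (hW'W : W' * W = 1) (A : ι → Matrix α α R) (l : List ι) :
    (l.map fun j => W * A j * W').prod = W * (l.map A).prod * W' := by
  induction l with
  | nil => simp [hWW']
  | cons j l ih =>
    simp only [List.map_cons, List.prod_cons, ih]
    rw [show W * A j * W' * (W * (l.map A).prod * W') =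
        W * A j * (W' * W) * (l.map A).prod * W' by simp only [Matrix.mul_assoc],
      hW'W, Matrix.mul_one, Matrix.mul_assoc W]

lemma norm_prod_map_le_of_conj [RCLike 𝕜] {W : Matrix β α 𝕜} {W' : Matrix α β 𝕜}
    (hWW' : W * W' = 1) (hW'W : W' * W = 1) {A : ι → Matrix α α 𝕜} {M : ι → Matrix β β 𝕜}
    (hM : ∀ j, M j = W * A j * W') (l : List ι) :
    ‖(l.map M).prod‖ ≤ ‖W‖ * ‖W'‖ * ‖(l.map A).prod‖ := by
  rw [show M = fun j => W * A j * W' from funext hM, prod_map_conj hWW' hW'W]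
  calc _ ≤ ‖W‖ * ‖(l.map A).prod‖ * ‖W'‖ := l2_opNorm_mul_mul_le _ _ _
    _ = _ := by ring

end Conj

lemma exists_mul_mul_eq_of_mul_mul_inv_eq_reindex {ι R m n : Type*} [CommRing R] [Fintype m]
    [DecidableEq m] [Fintype n] [DecidableEq n] {e : n ≃ m} {V : Matrix m m R} (hV : IsUnit V)
    {A : ι → Matrix m m R} {M : ι → Matrix n n R} (h : ∀ j, V * A j * V⁻¹ = reindex e e (M j)) :
    ∃ (W : Matrix n m R) (W' : Matrix m n R), W * W' = 1 ∧ W' * W = 1 ∧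
      ∀ j, M j = W * A j * W' := by
  have hdet : IsUnit V.det := (isUnit_iff_isUnit_det V).mp hV
  refine ⟨V.submatrix e id, V⁻¹.submatrix id e, ?_, ?_, fun j => ?_⟩
  · rw [← submatrix_mul _ _ _ _ _ Function.bijective_id, mul_nonsing_inv V hdet,
      submatrix_one_equiv]
  · rw [submatrix_mul_equiv, nonsing_inv_mul V hdet, submatrix_id_id]
  · calc M j = (V * A j * V⁻¹).submatrix e e := by simp [h j]
      _ = _ := by
        rw [submatrix_mul _ _ _ id _ Function.bijective_id,
          submatrix_mul _ _ _ id _ Function.bijective_id, submatrix_id_id]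

section JSRComparison

variable {s t u J : ℕ}

lemma JSR_le_JSR_of_norm_prod_map_le {A : Fin J → Matrix (Fin s) (Fin s) ℝ}
    {A' : Fin J → Matrix (Fin t) (Fin t) ℝ} {κ : ℝ} (hκ : 0 ≤ κ)
    (h : ∀ l : List (Fin J), ‖(l.map A').prod‖ ≤ κ * ‖(l.map A).prod‖) : JSR A' ≤ JSR A := by
  refine le_of_forall_gt_imp_ge_of_dense fun r hr => ?_
  have hr₀ : 0 ≤ r := (JSR_nonneg A).trans hr.le
  obtain ⟨K, hK, hA⟩ := exists_norm_prod_map_le_of_JSR_lt A hr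
  refine JSR_le_of_norm_prod_map_le A' hr₀ (K := κ * K) fun l => ?_
  calc ‖(l.map A').prod‖ ≤ κ * (K * r ^ l.length) := (h l).trans (by gcongr; exact hA l)
    _ ≤ κ * K * (l.length + 1) * r ^ l.length := by
        have : 0 ≤ κ * K * l.length * r ^ l.length := by positivity
        nlinarith

lemma JSR_le_max_of_norm_prod_map_le {A : Fin J → Matrix (Fin s) (Fin s) ℝ}
    {B : Fin J → Matrix (Fin t) (Fin t) ℝ} {C : Fin J → Matrix (Fin t) (Fin u) ℝ}
    {D : Fin J → Matrix (Fin u) (Fin u) ℝ} {κ : ℝ} (hκ : 0 ≤ κ)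
    (h : ∀ l : List (Fin J), ‖(l.map A).prod‖ ≤
      κ * ‖(l.map fun j => fromBlocks (B j) (C j) 0 (D j)).prod‖) :
    JSR A ≤ max (JSR B) (JSR D) := by
  refine le_of_forall_gt_imp_ge_of_dense fun r hr => ?_
  have hrB : JSR B < r := (le_max_left _ _).trans_lt hr
  have hr₀ : 0 < r := (JSR_nonneg B).trans_lt hrB
  obtain ⟨KB, hKB, hB⟩ := exists_norm_prod_map_le_of_JSR_lt B hrB
  obtain ⟨KD, hKD, hD⟩ := exists_norm_prod_map_le_of_JSR_lt D ((le_max_right _ _).trans_lt hr)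
  set c := (∑ i, ‖C i‖) / r
  have hC : ∀ j, ‖C j‖ ≤ c * r := fun j => by
    rw [div_mul_cancel₀ _ hr₀.ne']
    exact Finset.single_le_sum (fun i _ => norm_nonneg (C i)) (Finset.mem_univ j)
  refine JSR_le_of_norm_prod_map_le A hr₀.le (K := κ * (KB + KB * c * KD + KD)) fun l => ?_
  calc ‖(l.map A).prod‖ ≤ κ * ‖(l.map fun j => fromBlocks (B j) (C j) 0 (D j)).prod‖ := h l
    _ ≤ κ * ((KB + KB * c * KD + KD) * (l.length + 1) * r ^ l.length) := by
        gcongr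
        exact norm_prod_map_fromBlocks_zero₂₁_le hKB (by positivity) hKD hr₀.le hB hC hD l
    _ = _ := by ring

end JSRComparison

theorem jsr_of_block_triangular_general {s₁ s₂ J : ℕ}
    (A : Fin J → Matrix (Fin (s₁ + s₂)) (Fin (s₁ + s₂)) ℝ)
    (V : Matrix (Fin (s₁ + s₂)) (Fin (s₁ + s₂)) ℝ) (hV : IsUnit V)
    (B : Fin J → Matrix (Fin s₁) (Fin s₁) ℝ)
    (C : Fin J → Matrix (Fin s₁) (Fin s₂) ℝ)
    (D : Fin J → Matrix (Fin s₂) (Fin s₂) ℝ)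
    (h : ∀ j, V * A j * V⁻¹ =
      Matrix.reindex finSumFinEquiv finSumFinEquiv
        (Matrix.fromBlocks (B j) (C j) 0 (D j))) :
    JSR A = max (JSR B) (JSR D) := by
  obtain ⟨W, W', hWW', hW'W, hM⟩ := exists_mul_mul_eq_of_mul_mul_inv_eq_reindex hV h
  have hA : ∀ j, A j = W' * fromBlocks (B j) (C j) 0 (D j) * W := fun j => by
    rw [hM, ← Matrix.mul_assoc, ← Matrix.mul_assoc, hW'W, Matrix.one_mul, Matrix.mul_assoc,
      hW'W, Matrix.mul_one]
  refine le_antisymm (JSR_le_max_of_norm_prod_map_le (by positivity)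
    (norm_prod_map_le_of_conj hW'W hWW' hA)) (max_le ?_ ?_)
  · exact JSR_le_JSR_of_norm_prod_map_le (by positivity) fun l =>
      (norm_prod_map_le_norm_prod_map_fromBlocks₁₁ C D l).trans
        (norm_prod_map_le_of_conj hWW' hW'W hM l)
  · exact JSR_le_JSR_of_norm_prod_map_le (by positivity) fun l =>
      (norm_prod_map_le_norm_prod_map_fromBlocks₂₂ B C l).trans
        (norm_prod_map_le_of_conj hWW' hW'W hM l)

/-- For a simultaneously block upper triangularisable family, the JSR is the
maximum of the JSRs of the diagonal blocks. -/
theorem jsr_of_block_triangular {s₁ s₂ J : ℕ} (hJ : 1 ≤ J)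
    (A : Fin J → Matrix (Fin (s₁ + s₂)) (Fin (s₁ + s₂)) ℝ)
    (V : Matrix (Fin (s₁ + s₂)) (Fin (s₁ + s₂)) ℝ) (hV : IsUnit V)
    (B : Fin J → Matrix (Fin s₁) (Fin s₁) ℝ)
    (C : Fin J → Matrix (Fin s₁) (Fin s₂) ℝ)
    (D : Fin J → Matrix (Fin s₂) (Fin s₂) ℝ)
    (h : ∀ j, V * A j * V⁻¹ =
      Matrix.reindex finSumFinEquiv finSumFinEquiv
        (Matrix.fromBlocks (B j) (C j) 0 (D j))) :
    JSR A = max (JSR B) (JSR D) :=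
  jsr_of_block_triangular_general A V hV B C D h
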